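/- arXiv:1803.11168 — 4 statements merged into one kernel-verified Lean document; each statement's English description precedes it below -/
import Mathlib

section
/- Let P be an r-dual graded graph such that P_{[0,m]} has no multiple edges, and let x ≠ y be two elements of rank m. If z and z′ are elements of rank m+1 that each cover both x and y, then z = z′. -/
open scoped BigOperators

/-- A graded (multi)graph: a rank function with finite fibers, a unique element of
rank `0`, and symmetric edge multiplicities supported between consecutive ranks. -/
structure GradedGraph where
  V : Type
  rank : V → ℕ
  mult : V → V → ℕ
  mult_comm : ∀ x y, mult x y = mult y x
  rankFin : ∀ n : ℕ, {x | rank x = n}.Finite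
  zero_unique : ∃! x, rank x = 0
  mult_rank : ∀ x y, mult x y ≠ 0 → rank y = rank x + 1 ∨ rank x = rank y + 1

namespace GradedGraph

/-- `Ux = Σ_{y : rank y = rank x + 1} m(x,y)·y`, on the basis vector `x`. -/
noncomputable def upOf (G : GradedGraph) (x : G.V) : G.V →₀ ℂ :=
  ∑ y ∈ (G.rankFin (G.rank x + 1)).toFinset, (G.mult x y : ℂ) • Finsupp.single y 1

/-- `Dy = Σ_{x : rank x = rank y − 1} m(x,y)·x`, on the basis vector `y`. -/
noncomputable def downOf (G : GradedGraph) (y : G.V) : G.V →₀ ℂ :=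
  ∑ x ∈ (G.rankFin (G.rank y - 1)).toFinset, (G.mult x y : ℂ) • Finsupp.single x 1

/-- The up operator `U` on `ℂP`. -/
noncomputable def up (G : GradedGraph) : (G.V →₀ ℂ) →ₗ[ℂ] (G.V →₀ ℂ) :=
  Finsupp.lsum ℂ fun x => LinearMap.id.smulRight (G.upOf x)

/-- The down operator `D` on `ℂP`. -/
noncomputable def down (G : GradedGraph) : (G.V →₀ ℂ) →ₗ[ℂ] (G.V →₀ ℂ) :=
  Finsupp.lsum ℂ fun y => LinearMap.id.smulRight (G.downOf y)

/-- The unique element `0̂` of rank zero. -/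
noncomputable def bot (G : GradedGraph) : G.V := G.zero_unique.exists.choose

/-- `e(x) = ⟨Uⁿ 0̂, x⟩` for `x` of rank `n`: the number of upward paths from `0̂`
to `x`, counted with products of edge multiplicities. -/
noncomputable def eCoeff (G : GradedGraph) (x : G.V) : ℂ :=
  ((G.up ^ (G.rank x)) (Finsupp.single G.bot 1)) x

/-- `y` covers `x`. -/
def Covers (G : GradedGraph) (x y : G.V) : Prop :=
  G.rank y = G.rank x + 1 ∧ 1 ≤ G.mult x y

/-- `P_{[0,m]}` has no multiple edges. -/
def NoMultipleEdgesUpTo (G : GradedGraph) (m : ℕ) : Prop :=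
  ∀ x y, G.rank x ≤ m → G.rank y ≤ m → G.mult x y ≤ 1

end GradedGraph

/-- `P` is an `r`-dual graded graph: `DU − UD = r·I`. -/
def IsDualGradedGraph (G : GradedGraph) (r : ℕ) : Prop :=
  G.down ∘ₗ G.up - G.up ∘ₗ G.down = (r : ℂ) • LinearMap.id

namespace GradedGraph

variable (G : GradedGraph)

lemma mem_fiber {n : ℕ} {x : G.V} : x ∈ (G.rankFin n).toFinset ↔ G.rank x = n := by
  simp

lemma up_single (a : G.V) : G.up (Finsupp.single a 1) = G.upOf a := by
  simp [up]

lemma down_single (a : G.V) : G.down (Finsupp.single a 1) = G.downOf a := by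
  simp [down]

lemma upOf_apply (a b : G.V) :
    G.upOf a b = if G.rank b = G.rank a + 1 then (G.mult a b : ℂ) else 0 := by
  classical
  rw [upOf, Finsupp.finset_sum_apply]
  simp only [Finsupp.smul_apply, Finsupp.single_apply, smul_eq_mul, mul_ite, mul_one, mul_zero]
  rw [Finset.sum_ite_eq' ((G.rankFin (G.rank a + 1)).toFinset) b (fun y => (G.mult a y : ℂ))]
  simp [mem_fiber]

lemma downOf_apply (a b : G.V) :
    G.downOf a b = if G.rank b = G.rank a - 1 then (G.mult b a : ℂ) else 0 := by
  classical
  rw [downOf, Finsupp.finset_sum_apply]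
  simp only [Finsupp.smul_apply, Finsupp.single_apply, smul_eq_mul, mul_ite, mul_one, mul_zero]
  rw [Finset.sum_ite_eq' ((G.rankFin (G.rank a - 1)).toFinset) b (fun y => (G.mult y a : ℂ))]
  simp [mem_fiber]

lemma DU_apply (a b : G.V) (hb : G.rank b = G.rank a) :
    (G.down (G.up (Finsupp.single a 1))) b
      = ∑ z ∈ (G.rankFin (G.rank a + 1)).toFinset, (G.mult a z * G.mult b z : ℂ) := by
  rw [up_single, upOf, map_sum, Finsupp.finset_sum_apply]
  refine Finset.sum_congr rfl fun z hz => ?_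
  rw [G.mem_fiber] at hz
  rw [map_smul, down_single, Finsupp.smul_apply, downOf_apply, hz]
  simp [hb, smul_eq_mul]

lemma UD_apply (a b : G.V) (hb : G.rank b = G.rank a) (ha : 1 ≤ G.rank a) :
    (G.up (G.down (Finsupp.single a 1))) b
      = ∑ w ∈ (G.rankFin (G.rank a - 1)).toFinset, (G.mult w a * G.mult w b : ℂ) := by
  rw [down_single, downOf, map_sum, Finsupp.finset_sum_apply]
  refine Finset.sum_congr rfl fun w hw => ?_
  rw [G.mem_fiber] at hw
  rw [map_smul, up_single, Finsupp.smul_apply, upOf_apply, hw]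
  have : G.rank a - 1 + 1 = G.rank a := Nat.succ_pred_eq_of_pos ha
  simp [hb, this, smul_eq_mul]

lemma key_nat {r : ℕ} (hG : IsDualGradedGraph G r) (a b : G.V)
    (hb : G.rank b = G.rank a) (ha : 1 ≤ G.rank a) (hne : a ≠ b) :
    ∑ z ∈ (G.rankFin (G.rank a + 1)).toFinset, G.mult a z * G.mult b z
      = ∑ w ∈ (G.rankFin (G.rank a - 1)).toFinset, G.mult w a * G.mult w b := by
  have h := LinearMap.congr_fun hG (Finsupp.single a 1)
  have h2 := congrArg (fun f : G.V →₀ ℂ => f b) h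
  simp only [LinearMap.sub_apply, LinearMap.comp_apply, LinearMap.smul_apply,
    LinearMap.id_apply, Finsupp.sub_apply, Finsupp.smul_apply,
    smul_eq_mul] at h2
  rw [Finsupp.single_eq_of_ne' hne, mul_zero] at h2
  rw [DU_apply G a b hb, UD_apply G a b hb ha, sub_eq_zero] at h2
  have : ((∑ z ∈ (G.rankFin (G.rank a + 1)).toFinset, G.mult a z * G.mult b z : ℕ) : ℂ)
      = ((∑ w ∈ (G.rankFin (G.rank a - 1)).toFinset, G.mult w a * G.mult w b : ℕ) : ℂ) := by
    push_cast
    exact h2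
  exact_mod_cast this

lemma exists_two {α : Type*} {s : Finset α} {f : α → ℕ} (hle : ∀ i ∈ s, f i ≤ 1)
    (h2 : 2 ≤ ∑ i ∈ s, f i) :
    ∃ i ∈ s, ∃ j ∈ s, i ≠ j ∧ 1 ≤ f i ∧ 1 ≤ f j := by
  classical
  obtain ⟨i, hi, hfi⟩ : ∃ i ∈ s, f i ≠ 0 := by
    by_contra h
    push_neg at h
    rw [Finset.sum_eq_zero h] at h2
    omega
  have hsplit : f i + ∑ j ∈ s.erase i, f j = ∑ j ∈ s, f j := Finset.add_sum_erase s f hi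
  have : 1 ≤ ∑ j ∈ s.erase i, f j := by
    have := hle i hi
    omega
  obtain ⟨j, hj, hfj⟩ : ∃ j ∈ s.erase i, f j ≠ 0 := by
    by_contra h
    push_neg at h
    rw [Finset.sum_eq_zero h] at this
    omega
  exact ⟨i, hi, j, (Finset.mem_erase.mp hj).2, ((Finset.mem_erase.mp hj).1 : j ≠ i).symm,
    Nat.one_le_iff_ne_zero.mpr hfi, Nat.one_le_iff_ne_zero.mpr hfj⟩

lemma claim {r m : ℕ} (hG : IsDualGradedGraph G r) (hsimple : G.NoMultipleEdgesUpTo m) :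
    ∀ k, k ≤ m → ∀ a b : G.V, G.rank a = k → G.rank b = k → a ≠ b →
      ∑ z ∈ (G.rankFin (k + 1)).toFinset, G.mult a z * G.mult b z ≤ 1 := by
  intro k
  induction k with
  | zero =>
    intro _ a b ha hb hne
    obtain ⟨c, -, hu⟩ := G.zero_unique
    exact absurd ((hu a ha).trans (hu b hb).symm) hne
  | succ k ih =>
    intro hk a b ha hb hne
    classical
    by_contra hS
    have hS2 : 2 ≤ ∑ z ∈ (G.rankFin (k + 1 + 1)).toFinset, G.mult a z * G.mult b z := by omega
    have hkey := G.key_nat hG a b (hb.trans ha.symm) (by omega) hne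
    rw [ha] at hkey
    have hT2 : 2 ≤ ∑ w ∈ (G.rankFin (k + 1 - 1)).toFinset, G.mult w a * G.mult w b := by
      omega
    simp only [Nat.add_sub_cancel] at hT2
    have hle : ∀ w ∈ (G.rankFin k).toFinset, G.mult w a * G.mult w b ≤ 1 := by
      intro w hw
      rw [G.mem_fiber] at hw
      have h1 := hsimple w a (by omega) (by omega)
      have h2 := hsimple w b (by omega) (by omega)
      have := Nat.mul_le_mul h1 h2
      simpa using this
    obtain ⟨w, hw, w', hw', hww, hfw, hfw'⟩ := exists_two hle hT2
    rw [G.mem_fiber] at hw hw'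
    have hwa : G.mult w a ≠ 0 ∧ G.mult w b ≠ 0 :=
      mul_ne_zero_iff.mp (by omega)
    have hwa' : G.mult w' a ≠ 0 ∧ G.mult w' b ≠ 0 :=
      mul_ne_zero_iff.mp (by omega)
    have hIH := ih (by omega) w w' hw hw' hww
    have hsub : ({a, b} : Finset G.V) ⊆ (G.rankFin (k + 1)).toFinset := by
      intro t ht
      rcases Finset.mem_insert.mp ht with h | h
      · subst h; exact (G.mem_fiber).mpr ha
      · rw [Finset.mem_singleton.mp h]; exact (G.mem_fiber).mpr hb
    have hlb : (∑ z ∈ ({a, b} : Finset G.V), G.mult w z * G.mult w' z)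
        ≤ ∑ z ∈ (G.rankFin (k + 1)).toFinset, G.mult w z * G.mult w' z :=
      Finset.sum_le_sum_of_subset hsub
    rw [Finset.sum_pair hne] at hlb
    have : 2 ≤ G.mult w a * G.mult w' a + G.mult w b * G.mult w' b := by
      have h1 : 1 ≤ G.mult w a * G.mult w' a :=
        Nat.one_le_iff_ne_zero.mpr (mul_ne_zero hwa.1 hwa'.1)
      have h2 : 1 ≤ G.mult w b * G.mult w' b :=
        Nat.one_le_iff_ne_zero.mpr (mul_ne_zero hwa.2 hwa'.2)
      omega
    omega

end GradedGraph

/-- Lemma 2.1(a). Let `P` be an `r`-dual graded graph such that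
`P_{[0,m]}` has no multiple edges, and let `x ≠ y` be two elements of rank `m`.
If `z` and `z′` are elements of rank `m+1` that each cover both `x` and `y`,
then `z = z′`. -/
theorem dual_graded_unique_upper_bound (G : GradedGraph) (r : ℕ) (hr : 0 < r)
    (hG : IsDualGradedGraph G r) (m : ℕ) (hsimple : G.NoMultipleEdgesUpTo m)
    (x y : G.V) (hx : G.rank x = m) (hy : G.rank y = m) (hxy : x ≠ y)
    (z z' : G.V) (hz : G.rank z = m + 1) (hz' : G.rank z' = m + 1)
    (hxz : G.Covers x z) (hyz : G.Covers y z) (hxz' : G.Covers x z') (hyz' : G.Covers y z') :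
    z = z' := by
  classical
  by_contra hzz
  have hclaim := G.claim hG hsimple m le_rfl x y hx hy hxy
  have hsub : ({z, z'} : Finset G.V) ⊆ (G.rankFin (m + 1)).toFinset := by
    intro t ht
    rcases Finset.mem_insert.mp ht with h | h
    · subst h; exact (G.mem_fiber).mpr hz
    · rw [Finset.mem_singleton.mp h]; exact (G.mem_fiber).mpr hz'
  have hlb : (∑ w ∈ ({z, z'} : Finset G.V), G.mult x w * G.mult y w)
      ≤ ∑ w ∈ (G.rankFin (m + 1)).toFinset, G.mult x w * G.mult y w :=
    Finset.sum_le_sum_of_subset hsub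
  rw [Finset.sum_pair hzz] at hlb
  have h1 : 1 ≤ G.mult x z * G.mult y z := Nat.mul_le_mul hxz.2 hyz.2
  have h2 : 1 ≤ G.mult x z' * G.mult y z' := Nat.mul_le_mul hxz'.2 hyz'.2
  omega
end

section
/- Let {e} = G₀ ⊆ G₁ ⊆ G₂ ⊆ ⋯ be an r-dual tower of groups. Then for all n ≥ 0, the group Gₙ has order rⁿ·n!. -/
open scoped BigOperators

/-- A conjugation-invariant (class) function. -/
def IsClassFun {G : Type} [Group G] (f : G → ℂ) : Prop :=
  ∀ g h : G, f (h * g * h⁻¹) = f g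

/-- Restriction of a class function along a group homomorphism. -/
def resCF {H G : Type} [Group H] [Group G] (φ : H →* G) (f : G → ℂ) : H → ℂ :=
  fun h => f (φ h)

open Classical in
/-- Induction of a class function along an (injective) group homomorphism:
`(Ind f)(g) = (1/|H|) Σ_{x ∈ G, k ∈ H, φ k = x⁻¹gx} f k`. -/
noncomputable def indCF {H G : Type} [Group H] [Group G] (φ : H →* G) (f : H → ℂ) : G → ℂ :=
  fun g => (Nat.card H : ℂ)⁻¹ * ∑ᶠ x : G, ∑ᶠ k : H, if φ k = x⁻¹ * g * x then f k else 0

/-- The standard inner product of class functions on `H`. -/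
noncomputable def charInner (H : Type) [Group H] (f g : H → ℂ) : ℂ :=
  (Nat.card H : ℂ)⁻¹ * ∑ᶠ h : H, f h * (starRingEnd ℂ) (g h)

/-- `f` is the character of some irreducible complex representation of `G`. -/
def IsIrrChar {G : Type} [Group G] (f : G → ℂ) : Prop :=
  ∃ V : FDRep ℂ G, CategoryTheory.Simple V ∧ f = FDRep.character V

def trivialChar (G : Type) [Group G] : G → ℂ := fun _ => 1

/-- A nested sequence of finite groups `{e} = G₀ ⊆ G₁ ⊆ G₂ ⊆ ⋯`, each embedded in the next. -/
structure TowerSeq where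
  G : ℕ → Type
  [grp : ∀ n, Group (G n)]
  [fin : ∀ n, Fintype (G n)]
  [triv : Subsingleton (G 0)]
  emb : ∀ n : ℕ, G n →* G (n + 1)
  emb_inj : ∀ n, Function.Injective (emb n)

attribute [instance] TowerSeq.grp TowerSeq.fin TowerSeq.triv

/-- The `r`-dual tower condition at level `n`:
`Res∘Ind − Ind∘Res = r·id` on class functions of `Gₙ`, where the `Ind∘Res`
term is interpreted as `0` when `n = 0`. -/
def DualAt (T : TowerSeq) (r : ℕ) : ℕ → Prop
  | 0 => ∀ f : T.G 0 → ℂ, IsClassFun f →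
      resCF (T.emb 0) (indCF (T.emb 0) f) = (r : ℂ) • f
  | (n+1) => ∀ f : T.G (n+1) → ℂ, IsClassFun f →
      resCF (T.emb (n+1)) (indCF (T.emb (n+1)) f)
        - indCF (T.emb n) (resCF (T.emb n) f) = (r : ℂ) • f

/-- An `r`-dual tower of groups. -/
def IsDualTower (T : TowerSeq) (r : ℕ) : Prop := ∀ n, DualAt T r n

/-- A partial `r`-dual tower of groups `{e} = G₀ ⊆ ⋯ ⊆ G_{m+1}`: the dual
condition holds for all `0 ≤ n ≤ m`. -/
def IsPartialDualTower (T : TowerSeq) (r m : ℕ) : Prop := ∀ n ≤ m, DualAt T r n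

/-- The action of permutations of `α` on `α → M` by permuting coordinates. -/
def permMulAut (α M : Type) [Group M] : Equiv.Perm α →* MulAut (α → M) where
  toFun σ :=
    { toFun := fun f => f ∘ σ.symm
      invFun := fun f => f ∘ σ
      left_inv := fun f => by ext i; simp
      right_inv := fun f => by ext i; simp
      map_mul' := fun f g => rfl }
  map_one' := rfl
  map_mul' := fun σ τ => rfl

/-- The wreath product `(ℤ/rℤ) ≀ Sₙ = (Fin n → ℤ/rℤ) ⋊ Sₙ`, with the symmetric
group permuting coordinates. -/
abbrev Wreath (r n : ℕ) : Type :=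
  SemidirectProduct (Fin n → Multiplicative (ZMod r)) (Equiv.Perm (Fin n))
    (permMulAut (Fin n) (Multiplicative (ZMod r)))


open Classical in
lemma ind_at_one {H G : Type} [Group H] [Group G] [Fintype H] [Fintype G]
    (φ : H →* G) (hφ : Function.Injective φ) (f : H → ℂ) :
    indCF φ f 1 = (Fintype.card H : ℂ)⁻¹ * (Fintype.card G) * f 1 := by
  unfold indCF
  have h2 : ∀ k : H, (φ k = 1) ↔ k = 1 := by
    intro k
    constructor
    · intro h; exact hφ (by simpa using h)
    · rintro rfl; simp
  have hinner : ∀ x : G, (∑ᶠ k : H, if φ k = x⁻¹ * 1 * x then f k else 0) = f 1 := by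
    intro x
    have hx : x⁻¹ * 1 * x = 1 := by group
    rw [hx, finsum_eq_sum_of_fintype]
    simp only [h2]
    simp [Finset.sum_ite_eq']
  rw [finsum_congr hinner, finsum_eq_sum_of_fintype, Finset.sum_const,
    Nat.card_eq_fintype_card]
  simp [Finset.card_univ, mul_assoc]

lemma trivial_isClassFun {G : Type} [Group G] : IsClassFun (fun _ : G => (1 : ℂ)) :=
  fun _ _ => rfl

lemma step_of_dual_tower (T : TowerSeq) (r : ℕ)
    (hT : IsDualTower T r) (n : ℕ) :
    Fintype.card (T.G (n + 1)) = r * (n + 1) * Fintype.card (T.G n) := by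
  induction n with
  | zero =>
    have h0 : Fintype.card (T.G 0) = 1 :=
      Fintype.card_eq_one_iff.mpr ⟨1, fun y => Subsingleton.elim y 1⟩
    have key := congrFun (hT 0 (fun _ => 1) trivial_isClassFun) 1
    simp only [resCF, map_one, Pi.smul_apply, smul_eq_mul, mul_one] at key
    rw [ind_at_one (T.emb 0) (T.emb_inj 0), h0] at key
    simp only [Nat.cast_one, inv_one, one_mul, mul_one] at key
    rw [h0]
    have : (Fintype.card (T.G 1) : ℂ) = ((r * (0 + 1) * 1 : ℕ) : ℂ) := by
      push_cast; simpa using key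
    exact_mod_cast this
  | succ n ih =>
    have hcn : (Fintype.card (T.G n) : ℂ) ≠ 0 := by
      exact_mod_cast (Fintype.card_pos).ne'
    have hcn1 : (Fintype.card (T.G (n + 1)) : ℂ) ≠ 0 := by
      exact_mod_cast (Fintype.card_pos).ne'
    have key := congrFun (hT (n + 1) (fun _ => 1) trivial_isClassFun) 1
    simp only [Pi.sub_apply, resCF, map_one, Pi.smul_apply, smul_eq_mul, mul_one] at key
    rw [ind_at_one (T.emb (n + 1)) (T.emb_inj (n + 1))] at key
    have hres : indCF (T.emb n) (resCF (T.emb n) (fun _ => (1 : ℂ))) 1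
        = (Fintype.card (T.G n) : ℂ)⁻¹ * (Fintype.card (T.G (n + 1))) * 1 :=
      ind_at_one (T.emb n) (T.emb_inj n) _
    rw [hres] at key
    have hih : (Fintype.card (T.G (n + 1)) : ℂ)
        = (r * (n + 1)) * Fintype.card (T.G n) := by
      rw [ih]; push_cast; ring
    have hratio : (Fintype.card (T.G n) : ℂ)⁻¹ * (Fintype.card (T.G (n + 1)))
        = r * (n + 1) := by
      rw [hih]; field_simp
    rw [mul_one, mul_one, hratio] at key
    have h2 : (Fintype.card (T.G (n + 1)) : ℂ)⁻¹ * (Fintype.card (T.G (n + 2)))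
        = r + r * (n + 1) := by linear_combination key
    have hfin : (Fintype.card (T.G (n + 2)) : ℂ)
        = ((r * (n + 1 + 1) * Fintype.card (T.G (n + 1)) : ℕ) : ℂ) := by
      field_simp at h2
      push_cast
      linear_combination h2
    exact_mod_cast hfin

/-- Proposition 2.1. If `{e} = G₀ ⊆ G₁ ⊆ ⋯` is an `r`-dual tower
of groups, then for all `n ≥ 0` the group `Gₙ` has order `rⁿ·n!`. -/
theorem card_of_dual_tower (T : TowerSeq) (r : ℕ) (hr : 0 < r)
    (hT : IsDualTower T r) (n : ℕ) :
    Fintype.card (T.G n) = r ^ n * n.factorial := by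
  induction n with
  | zero =>
    simp [Fintype.card_eq_one_iff.mpr ⟨(1 : T.G 0), fun y => Subsingleton.elim y 1⟩]
  | succ n ih =>
    rw [step_of_dual_tower T r hT n, ih, Nat.factorial_succ]
    ring
end

section
/- Let V be a complex inner product space, let U, D : V → V be linear maps which are adjoint to each other (⟨Ux, y⟩ = ⟨x, Dy⟩ for all x, y ∈ V), suppose D∘U − U∘D = r·id for a positive real number r, and let v ∈ V satisfy Dv = 0. Then for every n ≥ 0, ⟨Uⁿv, Uⁿv⟩ = rⁿ·n!·⟨v, v⟩. -/
open scoped InnerProductSpace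

/-- Let `V` be a complex inner product space, let `U, D : V → V`
be linear maps adjoint to each other, suppose `D∘U − U∘D = r·id` for a positive
real number `r`, and let `v ∈ V` satisfy `Dv = 0`. Then for every `n ≥ 0`,
`⟨Uⁿv, Uⁿv⟩ = rⁿ·n!·⟨v, v⟩`. -/
theorem norm_sq_pow_up (V : Type) [NormedAddCommGroup V] [InnerProductSpace ℂ V]
    (U D : V →ₗ[ℂ] V) (r : ℝ) (hr : 0 < r)
    (hadj : ∀ x y : V, ⟪U x, y⟫_ℂ = ⟪x, D y⟫_ℂ)
    (hcomm : D ∘ₗ U - U ∘ₗ D = (r : ℂ) • LinearMap.id)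
    (v : V) (hv : D v = 0) (n : ℕ) :
    ⟪(U ^ n) v, (U ^ n) v⟫_ℂ = (r : ℂ) ^ n * (n.factorial : ℂ) * ⟪v, v⟫_ℂ := by
  have hDU : ∀ x : V, D (U x) = U (D x) + (r : ℂ) • x := by
    intro x
    have := congrArg (fun f => f x) hcomm
    simp only [LinearMap.sub_apply, LinearMap.comp_apply, LinearMap.smul_apply,
      LinearMap.id_apply] at this
    linear_combination (norm := module) this
  have hD : ∀ m : ℕ, D ((U ^ (m + 1)) v) = (((m : ℂ) + 1) * r) • (U ^ m) v := by
    intro m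
    induction m with
    | zero =>
      simp [pow_succ, hDU, hv]
    | succ k ih =>
      have : (U ^ (k + 1 + 1)) v = U ((U ^ (k + 1)) v) := by
        rw [pow_succ']; rfl
      rw [this, hDU, ih]
      have : (U ^ (k + 1)) v = U ((U ^ k) v) := by rw [pow_succ']; rfl
      rw [map_smul, this]
      push_cast
      module
  induction n with
  | zero => simp
  | succ k ih =>
    have h1 : (U ^ (k + 1)) v = U ((U ^ k) v) := by rw [pow_succ']; rfl
    calc ⟪(U ^ (k + 1)) v, (U ^ (k + 1)) v⟫_ℂ
        = ⟪(U ^ k) v, D ((U ^ (k + 1)) v)⟫_ℂ := by rw [h1, hadj]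
      _ = (((k : ℂ) + 1) * r) * ⟪(U ^ k) v, (U ^ k) v⟫_ℂ := by
          rw [hD k, inner_smul_right]
      _ = (r : ℂ) ^ (k + 1) * ((k + 1).factorial : ℂ) * ⟪v, v⟫_ℂ := by
          rw [ih]; push_cast [Nat.factorial_succ]; ring
end

section
/- Let r be an odd prime, and let G be a nonabelian group of order 2r² whose abelianization G/[G,G] has order greater than 2. Then G is isomorphic to the wreath product (ℤ/rℤ) ≀ S₂, i.e., to the semidirect product (ℤ/rℤ × ℤ/rℤ) ⋊ ℤ/2ℤ in which the nontrivial element of ℤ/2ℤ acts by swapping the two coordinates. -/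
section Aux
variable {H : Type*} [Group H]

lemma aux_pow_mod {g : H} {r : ℕ} (hg : g ^ r = 1) (m : ℕ) : g ^ (m % r) = g ^ m := by
  conv_rhs => rw [← Nat.div_add_mod m r, pow_add, pow_mul, hg, one_pow, one_mul]

lemma aux_normal_of_index_two {K : Subgroup H} (h : K.index = 2) : K.Normal := by
  constructor
  intro n hn g
  rw [Subgroup.mul_mem_iff_of_index_two h, Subgroup.mul_mem_iff_of_index_two h,
    K.inv_mem_iff]
  tauto

lemma aux_dvd_prime_sq {r d : ℕ} (hr : r.Prime) (h : d ∣ r ^ 2) :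
    d = 1 ∨ d = r ∨ d = r ^ 2 := by
  rcases (Nat.dvd_prime_pow hr).mp h with ⟨i, hi, rfl⟩
  interval_cases i
  · exact Or.inl rfl
  · exact Or.inr (Or.inl (pow_one r))
  · exact Or.inr (Or.inr rfl)

end Aux

/-- Let `r` be an odd prime and let `G` be a nonabelian group of
order `2r²` whose abelianization has order greater than `2`. Then
`G ≅ (ℤ/rℤ) ≀ S₂`, the semidirect product `(ℤ/rℤ × ℤ/rℤ) ⋊ ℤ/2ℤ` in which the
nontrivial element of `ℤ/2ℤ` swaps the two coordinates. -/
theorem nonabelian_2r2_iso_wreath (r : ℕ) (hr : r.Prime) (hodd : Odd r)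
    (G : Type) [Group G] [Finite G]
    (hcard : Nat.card G = 2 * r ^ 2)
    (hna : ∃ a b : G, a * b ≠ b * a)
    (hab : 2 < Nat.card (Abelianization G)) :
    Nonempty (G ≃* Wreath r 2) := by
  classical
  haveI : Fact r.Prime := ⟨hr⟩
  haveI : NeZero r := ⟨hr.ne_zero⟩
  haveI : Fintype G := Fintype.ofFinite G
  have hr2 : r ≠ 2 := by rintro rfl; simp [Nat.odd_iff] at hodd
  have hr0 : 0 < r := hr.pos
  -- element of order 2
  have hdvd : (2 : ℕ) ∣ Fintype.card G := by
    rw [← Nat.card_eq_fintype_card, hcard]; exact dvd_mul_right 2 _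
  obtain ⟨t, ht2⟩ := exists_prime_orderOf_dvd_card 2 hdvd
  have htt : t * t = 1 := by
    have := pow_orderOf_eq_one t; rwa [ht2, pow_two] at this
  have htinv : t⁻¹ = t := by
    rw [inv_eq_iff_mul_eq_one, htt]
  -- Sylow r-subgroup
  obtain ⟨P⟩ : Nonempty (Sylow r G) := inferInstance
  have hPcard : Nat.card (P : Subgroup G) = r ^ 2 := by
    rw [Sylow.card_eq_multiplicity, hcard]
    congr 1
    rw [Nat.factorization_mul two_ne_zero (pow_ne_zero 2 hr.ne_zero),
      hr.factorization_pow, Nat.Prime.factorization Nat.prime_two]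
    simp [Finsupp.single_apply, (Ne.symm hr2)]
  have hPindex : (P : Subgroup G).index = 2 := by
    have h := (P : Subgroup G).card_mul_index
    rw [hPcard, hcard] at h
    have : r ^ 2 * (P : Subgroup G).index = r ^ 2 * 2 := by linarith
    exact Nat.eq_of_mul_eq_mul_left (by positivity) this
  haveI hPnorm : (P : Subgroup G).Normal := aux_normal_of_index_two hPindex
  -- P is abelian
  have hcommP : ∀ p q : G, p ∈ (P : Subgroup G) → q ∈ (P : Subgroup G) → p * q = q * p := by
    intro p q hp hq
    have h := IsPGroup.commutative_of_card_eq_prime_sq (p := r) hPcard ⟨p, hp⟩ ⟨q, hq⟩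
    exact congrArg Subtype.val h
  -- every element of P has p ^ r² = 1
  have hpowP : ∀ p : G, p ∈ (P : Subgroup G) → p ^ (r ^ 2) = 1 := by
    intro p hp
    have h : (⟨p, hp⟩ : (P : Subgroup G)) ^ (r ^ 2) = 1 := by
      rw [← hPcard]; exact pow_card_eq_one'
    exact congrArg Subtype.val h
  -- t is not in P
  have htP : t ∉ (P : Subgroup G) := by
    intro h
    have h2 : orderOf t ∣ r ^ 2 := by
      have := hpowP t h; exact orderOf_dvd_of_pow_eq_one this
    rw [ht2] at h2
    exact hr2 ((Nat.prime_dvd_prime_iff_eq Nat.prime_two hr).mp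
      (Nat.Prime.dvd_of_dvd_pow (p := 2) Nat.prime_two h2)).symm
  -- conjugation by t preserves P
  have hconjP : ∀ p : G, p ∈ (P : Subgroup G) → t * p * t ∈ (P : Subgroup G) := by
    intro p hp
    have := hPnorm.conj_mem p hp t
    rwa [htinv] at this
  -- square root exponent
  set k : ℕ := (r ^ 2 + 1) / 2 with hk
  have h2k : 2 * k = r ^ 2 + 1 := by
    have : Odd (r ^ 2) := hodd.pow
    obtain ⟨m, hm⟩ := this
    omega
  have hsqrt : ∀ p : G, p ∈ (P : Subgroup G) → (p ^ k) * (p ^ k) = p := by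
    intro p hp
    rw [← pow_add, show k + k = 2 * k by ring, h2k, pow_add, hpowP p hp, one_mul, pow_one]
  -- conjugation is multiplicative
  have hconjmul : ∀ x y : G, t * (x * y) * t = (t * x * t) * (t * y * t) := by
    intro x y
    have h : (t * x * t) * (t * y * t) = t * x * (t * t) * y * t := by group
    rw [h, htt]; group
  have hconjpow : ∀ (x : G) (n : ℕ), t * x ^ n * t = (t * x * t) ^ n := by
    intro x n
    induction n with
    | zero => simpa using htt
    | succ n ih => rw [pow_succ, pow_succ, hconjmul, ih]
  have hconjinv : ∀ x : G, t * x⁻¹ * t = (t * x * t)⁻¹ := by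
    intro x
    rw [mul_inv_rev, mul_inv_rev, htinv, mul_assoc]
  have hconjconj : ∀ x : G, t * (t * x * t) * t = x := by
    intro x
    rw [show t * (t * x * t) * t = (t * t) * x * (t * t) by group, htt, one_mul, mul_one]
  -- the plus and minus parts
  set Ap : Subgroup G :=
    { carrier := {x | x ∈ (P : Subgroup G) ∧ t * x * t = x}
      one_mem' := ⟨one_mem _, by rw [mul_one, htt]⟩
      mul_mem' := by
        rintro x y ⟨hx, hx2⟩ ⟨hy, hy2⟩
        exact ⟨mul_mem hx hy, by rw [hconjmul, hx2, hy2]⟩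
      inv_mem' := by
        rintro x ⟨hx, hx2⟩
        exact ⟨inv_mem hx, by rw [hconjinv, hx2]⟩ } with hApdef
  set Am : Subgroup G :=
    { carrier := {x | x ∈ (P : Subgroup G) ∧ t * x * t = x⁻¹}
      one_mem' := ⟨one_mem _, by rw [mul_one, htt, inv_one]⟩
      mul_mem' := by
        rintro x y ⟨hx, hx2⟩ ⟨hy, hy2⟩
        refine ⟨mul_mem hx hy, ?_⟩
        rw [hconjmul, hx2, hy2, mul_inv_rev, hcommP _ _ (inv_mem hy) (inv_mem hx)]
      inv_mem' := by
        rintro x ⟨hx, hx2⟩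
        exact ⟨inv_mem hx, by rw [hconjinv, hx2]⟩ } with hAmdef
  have hApmem : ∀ x : G, x ∈ Ap ↔ x ∈ (P : Subgroup G) ∧ t * x * t = x := fun x => Iff.rfl
  have hAmmem : ∀ x : G, x ∈ Am ↔ x ∈ (P : Subgroup G) ∧ t * x * t = x⁻¹ := fun x => Iff.rfl
  -- trivial intersection
  have hApAm : ∀ x : G, x ∈ Ap → x ∈ Am → x = 1 := by
    intro x hxp hxm
    obtain ⟨hxP, hx1⟩ := hxp
    obtain ⟨-, hx2⟩ := hxm
    have hxinv : x = x⁻¹ := hx1.symm.trans hx2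
    have hxx : x * x = 1 := by nth_rewrite 2 [hxinv]; exact mul_inv_cancel x
    have h1 : orderOf x ∣ 2 := orderOf_dvd_of_pow_eq_one (by rwa [pow_two])
    have h2 : orderOf x ∣ r ^ 2 := orderOf_dvd_of_pow_eq_one (hpowP x hxP)
    have h4 : Nat.gcd 2 (r ^ 2) = 1 :=
      Nat.Coprime.gcd_eq_one
        (Nat.Coprime.pow_right 2 ((Nat.coprime_primes Nat.prime_two hr).mpr (Ne.symm hr2)))
    exact orderOf_eq_one_iff.mp (Nat.dvd_one.mp (h4 ▸ Nat.dvd_gcd h1 h2))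
  -- decomposition p = ap * bp
  have hdecompP : ∀ p : G, p ∈ (P : Subgroup G) →
      ∃ x y : G, x ∈ Ap ∧ y ∈ Am ∧ p = x * y := by
    intro p hp
    have hτp := hconjP p hp
    refine ⟨(p * (t * p * t)) ^ k, (p * (t * p * t)⁻¹) ^ k, ?_, ?_, ?_⟩
    · refine ⟨pow_mem (mul_mem hp hτp) k, ?_⟩
      rw [hconjpow]
      congr 1
      rw [hconjmul, hconjconj, hcommP _ _ hτp hp]
    · refine ⟨pow_mem (mul_mem hp (inv_mem hτp)) k, ?_⟩
      rw [hconjpow, ← inv_pow]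
      congr 1
      rw [hconjmul, hconjinv, hconjconj, mul_inv_rev, inv_inv]
    · have hc : Commute (p * (t * p * t)) (p * (t * p * t)⁻¹) :=
        hcommP _ _ (mul_mem hp hτp) (mul_mem hp (inv_mem hτp))
      rw [← hc.mul_pow]
      have h5 : (p * (t * p * t)) * (p * (t * p * t)⁻¹) = p * p := by
        calc p * (t * p * t) * (p * (t * p * t)⁻¹)
            = p * ((t * p * t) * p) * (t * p * t)⁻¹ := by group
          _ = p * (p * (t * p * t)) * (t * p * t)⁻¹ := by rw [hcommP _ _ hτp hp]
          _ = p * p := by group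
      rw [h5, ← pow_two, ← pow_mul, h2k, pow_succ, hpowP p hp, one_mul]
  have hApP : Ap ≤ (P : Subgroup G) := fun x hx => hx.1
  have hAmP : Am ≤ (P : Subgroup G) := fun x hx => hx.1
  -- coset decomposition of G
  have hcoset : ∀ g : G, g ∈ (P : Subgroup G) ∨ ∃ p ∈ (P : Subgroup G), g = p * t := by
    intro g
    by_cases hg : g ∈ (P : Subgroup G)
    · exact Or.inl hg
    · refine Or.inr ⟨g * t, ?_, ?_⟩
      · rw [Subgroup.mul_mem_iff_of_index_two hPindex]
        tauto
      · rw [mul_assoc, htt, mul_one]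
  -- the product map Ap × Am → P is bijective
  have hbij : Function.Bijective
      (fun z : (↥Ap × ↥Am) =>
        (⟨z.1.1 * z.2.1, mul_mem (hApP z.1.2) (hAmP z.2.2)⟩ : ↥(P : Subgroup G))) := by
    constructor
    · rintro ⟨⟨x1, hx1⟩, ⟨y1, hy1⟩⟩ ⟨⟨x2, hx2⟩, ⟨y2, hy2⟩⟩ h
      simp only [Subtype.mk.injEq] at h
      have hz : x2⁻¹ * x1 = y2 * y1⁻¹ := by
        have h2 := congrArg (fun g => x2⁻¹ * g * y1⁻¹) h
        simpa [mul_assoc] using h2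
      have hmem1 : x2⁻¹ * x1 ∈ Ap := mul_mem (inv_mem hx2) hx1
      have hmem2 : x2⁻¹ * x1 ∈ Am := hz ▸ mul_mem hy2 (inv_mem hy1)
      have h1 : x2⁻¹ * x1 = 1 := hApAm _ hmem1 hmem2
      have hx : x1 = x2 := by
        have := inv_mul_eq_one.mp h1; exact this.symm
      have hy : y1 = y2 := by
        rw [h1] at hz
        have := mul_inv_eq_one.mp hz.symm; exact this.symm
      simp [Prod.ext_iff, Subtype.ext_iff, hx, hy]
    · rintro ⟨p, hp⟩
      obtain ⟨x, y, hx, hy, hpxy⟩ := hdecompP p hp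
      exact ⟨⟨⟨x, hx⟩, ⟨y, hy⟩⟩, Subtype.ext hpxy.symm⟩
  have hcardprod : Nat.card ↥Ap * Nat.card ↥Am = r ^ 2 := by
    calc Nat.card ↥Ap * Nat.card ↥Am = Nat.card (↥Ap × ↥Am) := (Nat.card_prod _ _).symm
      _ = Nat.card ↥(P : Subgroup G) := Nat.card_eq_of_bijective _ hbij
      _ = r ^ 2 := hPcard
  -- Am is nontrivial (else G would be abelian)
  have hAmne : Nat.card ↥Am ≠ 1 := by
    intro h1
    have hAmbot : Am = ⊥ := Subgroup.card_eq_one.mp h1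
    have hfix : ∀ p ∈ (P : Subgroup G), t * p * t = p := by
      intro p hp
      obtain ⟨x, y, hx, hy, hpxy⟩ := hdecompP p hp
      rw [hAmbot, Subgroup.mem_bot] at hy
      rw [hpxy, hy, mul_one]
      exact hx.2
    have hswap : ∀ p ∈ (P : Subgroup G), t * p = p * t := by
      intro p hp
      have h := congrArg (· * t) (hfix p hp)
      simpa [mul_assoc, htt] using h
    obtain ⟨g, h, hgh⟩ := hna
    apply hgh
    rcases hcoset g with hg | ⟨p, hp, rfl⟩ <;> rcases hcoset h with hh | ⟨q, hq, rfl⟩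
    · exact hcommP g h hg hh
    · calc g * (q * t) = (g * q) * t := by group
        _ = (q * g) * t := by rw [hcommP g q hg hq]
        _ = q * (g * t) := by group
        _ = q * (t * g) := by rw [hswap g hg]
        _ = (q * t) * g := by group
    · calc (p * t) * h = p * (t * h) := by group
        _ = p * (h * t) := by rw [hswap h hh]
        _ = (p * h) * t := by group
        _ = (h * p) * t := by rw [hcommP p h hp hh]
        _ = h * (p * t) := by group
    · calc (p * t) * (q * t) = p * (t * q) * t := by group
        _ = p * (q * t) * t := by rw [hswap q hq]
        _ = (p * q) * (t * t) := by group
        _ = p * q := by rw [htt, mul_one]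
        _ = q * p := hcommP p q hp hq
        _ = (q * p) * (t * t) := by rw [htt, mul_one]
        _ = q * (p * t) * t := by group
        _ = q * (t * p) * t := by rw [← hswap p hp]
        _ = (q * t) * (p * t) := by group
  -- Ap is nontrivial (else the abelianization would have order ≤ 2)
  have hApne : Nat.card ↥Ap ≠ 1 := by
    intro h1
    have hApbot : Ap = ⊥ := Subgroup.card_eq_one.mp h1
    have hinvall : ∀ p ∈ (P : Subgroup G), t * p * t = p⁻¹ := by
      intro p hp
      obtain ⟨x, y, hx, hy, hpxy⟩ := hdecompP p hp
      rw [hApbot, Subgroup.mem_bot] at hx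
      rw [hpxy, hx, one_mul]
      exact hy.2
    have hPle : (P : Subgroup G) ≤ commutator G := by
      intro p hp
      have hq : p ^ k ∈ (P : Subgroup G) := pow_mem hp k
      open scoped commutatorElement in
      have hcq : ⁅t, (p ^ k)⁻¹⁆ = p := by
        rw [commutatorElement_def, htinv, inv_inv]
        calc t * (p ^ k)⁻¹ * t * p ^ k = (t * (p ^ k)⁻¹ * t) * p ^ k := by group
          _ = (t * p ^ k * t)⁻¹ * p ^ k := by rw [hconjinv]
          _ = ((p ^ k)⁻¹)⁻¹ * p ^ k := by rw [hinvall _ hq]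
          _ = p ^ k * p ^ k := by rw [inv_inv]
          _ = p := hsqrt p hp
      rw [← hcq]
      exact Subgroup.commutator_mem_commutator (Subgroup.mem_top t) (Subgroup.mem_top _)
    have hidx : (commutator G).index ∣ ((P : Subgroup G)).index :=
      Subgroup.index_dvd_of_le hPle
    rw [hPindex] at hidx
    have hcardab : Nat.card (Abelianization G) = (commutator G).index := rfl
    rw [hcardab] at hab
    have := Nat.le_of_dvd (by norm_num) hidx
    omega
  -- both have cardinality r
  have hApcard : Nat.card ↥Ap = r := by
    have hdvd2 : Nat.card ↥Ap ∣ r ^ 2 := by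
      rw [← hPcard]; exact Subgroup.card_dvd_of_le hApP
    rcases aux_dvd_prime_sq hr hdvd2 with h | h | h
    · exact absurd h hApne
    · exact h
    · exfalso
      rw [h] at hcardprod
      have hAm1 : Nat.card ↥Am = 1 := by
        have hpos : 0 < r ^ 2 := by positivity
        nlinarith [Nat.one_le_iff_ne_zero.mpr (Nat.card_ne_zero.mpr ⟨⟨(1 : G), one_mem Am⟩, inferInstance⟩ : Nat.card ↥Am ≠ 0)]
      exact hAmne hAm1
  have hAmcard : Nat.card ↥Am = r := by
    rw [hApcard] at hcardprod
    have : r * Nat.card ↥Am = r * r := by rw [hcardprod]; ring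
    exact Nat.eq_of_mul_eq_mul_left hr0 this
  -- generators of Ap and Am
  have hgen : ∀ (A : Subgroup G), Nat.card ↥A = r →
      ∃ a : G, a ∈ A ∧ orderOf a = r ∧ Subgroup.zpowers a = A := by
    intro A hA
    have : Nontrivial ↥A := by
      rw [← Finite.one_lt_card_iff_nontrivial, hA]; exact hr.one_lt
    obtain ⟨x, hx⟩ := exists_ne (1 : ↥A)
    have hxr : (x : G) ^ r = 1 := by
      have h : x ^ r = 1 := by rw [← hA]; exact pow_card_eq_one'
      exact congrArg Subtype.val h
    have hord : orderOf (x : G) = r := by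
      have h1 : orderOf (x : G) ∣ r := orderOf_dvd_of_pow_eq_one hxr
      rcases (Nat.dvd_prime hr).mp h1 with h | h
      · exfalso
        exact hx (Subtype.ext (orderOf_eq_one_iff.mp h))
      · exact h
    refine ⟨x, x.2, hord, ?_⟩
    apply Subgroup.eq_of_le_of_card_ge (Subgroup.zpowers_le.mpr x.2)
    rw [hA, Nat.card_zpowers, hord]
  obtain ⟨a, haA, haord, haz⟩ := hgen Ap hApcard
  obtain ⟨b, hbA, hbord, hbz⟩ := hgen Am hAmcard
  have haP : a ∈ (P : Subgroup G) := hApP haA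
  have hbP : b ∈ (P : Subgroup G) := hAmP hbA
  have hta : t * a * t = a := haA.2
  have htb : t * b * t = b⁻¹ := hbA.2
  have hcomm_ab : a * b = b * a := hcommP a b haP hbP
  -- the two swapped generators
  set u : G := a * b with hu
  set v : G := a * b⁻¹ with hv
  have huP : u ∈ (P : Subgroup G) := mul_mem haP hbP
  have hvP : v ∈ (P : Subgroup G) := mul_mem haP (inv_mem hbP)
  have hcomm_uv : Commute u v := hcommP u v huP hvP
  have har : a ^ r = 1 := by rw [← haord]; exact pow_orderOf_eq_one a
  have hbr : b ^ r = 1 := by rw [← hbord]; exact pow_orderOf_eq_one b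
  have hur : u ^ r = 1 := by
    rw [hu, (Commute.mul_pow (hcommP a b haP hbP) r), har, hbr, one_mul]
  have hvr : v ^ r = 1 := by
    rw [hv, (Commute.mul_pow (hcommP a b⁻¹ haP (inv_mem hbP)) r), har, inv_pow, hbr,
      inv_one, one_mul]
  have htu : t * u * t = v := by rw [hu, hconjmul, hta, htb]
  have htv : t * v * t = u := by
    rw [hv, hconjmul, hta, hconjinv, htb, inv_inv]
  have huv_a : u * v = a * a := by
    calc u * v = a * (b * a) * b⁻¹ := by rw [hu, hv]; group
      _ = a * (a * b) * b⁻¹ := by rw [hcommP b a hbP haP]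
      _ = a * a := by group
  have huv_b : u * v⁻¹ = b * b := by
    calc u * v⁻¹ = a * b * (b * a⁻¹) := by rw [hu, hv]; group
      _ = a * (b * b) * a⁻¹ := by group
      _ = (b * b) * a * a⁻¹ := by rw [hcommP a (b * b) haP (mul_mem hbP hbP)]
      _ = b * b := by group
  have ha_uv : (u * v) ^ k = a := by
    rw [huv_a, ← pow_two, ← pow_mul, h2k, pow_succ, hpowP a haP, one_mul]
  have hb_uv : (u * v⁻¹) ^ k = b := by
    rw [huv_b, ← pow_two, ← pow_mul, h2k, pow_succ, hpowP b hbP, one_mul]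
  haveI : Fact (1 < r) := ⟨hr.one_lt⟩
  -- homomorphism from ℤˣ sending -1 to t
  set fU : ℤˣ →* G :=
    { toFun := fun s => if s = 1 then 1 else t
      map_one' := if_pos rfl
      map_mul' := by
        intro x y
        rcases Int.units_eq_one_or x with rfl | rfl <;>
          rcases Int.units_eq_one_or y with rfl | rfl <;>
          simp [htt] } with hfUdef
  set fH : Equiv.Perm (Fin 2) →* G := fU.comp Equiv.Perm.sign with hfHdef
  have hperm : ∀ σ : Equiv.Perm (Fin 2), σ = 1 ∨ σ = Equiv.swap 0 1 := by decide
  have hfHs : fH (Equiv.swap 0 1) = t := by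
    have hsign : Equiv.Perm.sign (Equiv.swap (0 : Fin 2) 1) = -1 :=
      Equiv.Perm.sign_swap (by decide)
    show fU (Equiv.Perm.sign (Equiv.swap (0 : Fin 2) 1)) = t
    rw [hsign]
    show (if (-1 : ℤˣ) = 1 then (1 : G) else t) = t
    norm_num
  -- homomorphism from the base group
  set fN : (Fin 2 → Multiplicative (ZMod r)) →* G :=
    { toFun := fun f =>
        u ^ (Multiplicative.toAdd (f 0)).val * v ^ (Multiplicative.toAdd (f 1)).val
      map_one' := by simp
      map_mul' := by
        intro f g
        simp only [Pi.mul_apply, toAdd_mul, ZMod.val_add]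
        rw [aux_pow_mod hur, aux_pow_mod hvr, pow_add, pow_add]
        calc u ^ (Multiplicative.toAdd (f 0)).val * u ^ (Multiplicative.toAdd (g 0)).val *
              (v ^ (Multiplicative.toAdd (f 1)).val * v ^ (Multiplicative.toAdd (g 1)).val)
            = u ^ (Multiplicative.toAdd (f 0)).val *
              (u ^ (Multiplicative.toAdd (g 0)).val * v ^ (Multiplicative.toAdd (f 1)).val) *
              v ^ (Multiplicative.toAdd (g 1)).val := by group
          _ = u ^ (Multiplicative.toAdd (f 0)).val *
              (v ^ (Multiplicative.toAdd (f 1)).val * u ^ (Multiplicative.toAdd (g 0)).val) *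
              v ^ (Multiplicative.toAdd (g 1)).val := by
                rw [(hcomm_uv.pow_pow _ _).eq]
          _ = _ := by group } with hfNdef
  have hfNapp : ∀ f : Fin 2 → Multiplicative (ZMod r),
      fN f = u ^ (Multiplicative.toAdd (f 0)).val * v ^ (Multiplicative.toAdd (f 1)).val :=
    fun f => rfl
  -- compatibility
  have hcompat : ∀ σ : Equiv.Perm (Fin 2),
      fN.comp ((permMulAut (Fin 2) (Multiplicative (ZMod r)) σ)).toMonoidHom
        = (MulAut.conj (fH σ)).toMonoidHom.comp fN := by
    intro σ
    rcases hperm σ with rfl | rfl <;> ext f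
    · show fN (f ∘ ⇑(1 : Equiv.Perm (Fin 2)).symm) = MulAut.conj (fH 1) (fN f)
      have h1 : f ∘ ⇑(1 : Equiv.Perm (Fin 2)).symm = f := rfl
      rw [h1, map_one, MulAut.conj_apply]
      group
    · show fN (f ∘ ⇑(Equiv.swap (0 : Fin 2) 1).symm)
        = MulAut.conj (fH (Equiv.swap 0 1)) (fN f)
      rw [MulAut.conj_apply, hfHs, htinv, hfNapp, hfNapp]
      have h0 : (f ∘ ⇑(Equiv.swap (0 : Fin 2) 1).symm) 0 = f 1 := by
        simp [Equiv.symm_swap]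
      have h1 : (f ∘ ⇑(Equiv.swap (0 : Fin 2) 1).symm) 1 = f 0 := by
        simp [Equiv.symm_swap]
      rw [h0, h1, hconjmul, hconjpow, hconjpow, htu, htv]
      exact (hcomm_uv.pow_pow _ _).eq
  set Φ : Wreath r 2 →* G := SemidirectProduct.lift fN fH hcompat with hΦdef
  -- u, v, t are in the range of Φ
  have hΦu : Φ (SemidirectProduct.inl (Pi.mulSingle (M := fun _ : Fin 2 => Multiplicative (ZMod r)) (0 : Fin 2) (Multiplicative.ofAdd (1 : ZMod r)))) = u := by
    rw [hΦdef, SemidirectProduct.lift_inl, hfNapp]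
    have h0 : (Pi.mulSingle (M := fun _ : Fin 2 => Multiplicative (ZMod r)) (0 : Fin 2) (Multiplicative.ofAdd (1 : ZMod r))) 0
        = Multiplicative.ofAdd (1 : ZMod r) := by simp
    have h1 : (Pi.mulSingle (M := fun _ : Fin 2 => Multiplicative (ZMod r)) (0 : Fin 2) (Multiplicative.ofAdd (1 : ZMod r))) 1
        = 1 := by simp [Pi.mulSingle_apply]
    rw [h0, h1]
    simp [ZMod.val_one]
  have hΦv : Φ (SemidirectProduct.inl (Pi.mulSingle (M := fun _ : Fin 2 => Multiplicative (ZMod r)) (1 : Fin 2) (Multiplicative.ofAdd (1 : ZMod r)))) = v := by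
    rw [hΦdef, SemidirectProduct.lift_inl, hfNapp]
    have h0 : (Pi.mulSingle (M := fun _ : Fin 2 => Multiplicative (ZMod r)) (1 : Fin 2) (Multiplicative.ofAdd (1 : ZMod r))) 0
        = 1 := by simp [Pi.mulSingle_apply]
    have h1 : (Pi.mulSingle (M := fun _ : Fin 2 => Multiplicative (ZMod r)) (1 : Fin 2) (Multiplicative.ofAdd (1 : ZMod r))) 1
        = Multiplicative.ofAdd (1 : ZMod r) := by simp
    rw [h0, h1]
    simp [ZMod.val_one]
  have hΦt : Φ (SemidirectProduct.inr (Equiv.swap 0 1)) = t := by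
    rw [hΦdef, SemidirectProduct.lift_inr, hfHs]
  -- surjectivity
  have hrangeP : ∀ p ∈ (P : Subgroup G), p ∈ Φ.range := by
    have hu_r : u ∈ Φ.range := ⟨_, hΦu⟩
    have hv_r : v ∈ Φ.range := ⟨_, hΦv⟩
    have ha_r : a ∈ Φ.range := ha_uv ▸ pow_mem (mul_mem hu_r hv_r) k
    have hb_r : b ∈ Φ.range := hb_uv ▸ pow_mem (mul_mem hu_r (inv_mem hv_r)) k
    intro p hp
    obtain ⟨x, y, hx, hy, rfl⟩ := hdecompP p hp
    have hxz : x ∈ Subgroup.zpowers a := haz.symm ▸ hx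
    have hyz : y ∈ Subgroup.zpowers b := hbz.symm ▸ hy
    obtain ⟨m, hm⟩ := hxz
    obtain ⟨n, hn⟩ := hyz
    rw [← hm, ← hn]
    exact mul_mem (zpow_mem ha_r m) (zpow_mem hb_r n)
  have hsurj : Function.Surjective Φ := by
    intro g
    have : g ∈ Φ.range := by
      rcases hcoset g with hg | ⟨p, hp, rfl⟩
      · exact hrangeP g hg
      · exact mul_mem (hrangeP p hp) ⟨SemidirectProduct.inr (Equiv.swap 0 1), hΦt⟩
    exact this
  -- cardinality
  have e : Wreath r 2 ≃ (Fin 2 → Multiplicative (ZMod r)) × Equiv.Perm (Fin 2) :=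
    ⟨fun x => (x.left, x.right), fun p => ⟨p.1, p.2⟩, fun x => by cases x; rfl,
      fun p => rfl⟩
  haveI : Finite (Wreath r 2) := Finite.of_equiv _ e.symm
  have hWcard : Nat.card (Wreath r 2) = 2 * r ^ 2 := by
    rw [Nat.card_congr e, Nat.card_prod, Nat.card_fun]
    have h1 : Nat.card (Multiplicative (ZMod r)) = r := by
      rw [Nat.card_congr (Multiplicative.toAdd (α := ZMod r)), Nat.card_zmod]
    have h2 : Nat.card (Equiv.Perm (Fin 2)) = 2 := by
      rw [Nat.card_eq_fintype_card, Fintype.card_perm, Fintype.card_fin]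
      rfl
    rw [h1, h2, Nat.card_eq_fintype_card, Fintype.card_fin]
    ring
  have hbijΦ : Function.Bijective Φ :=
    (Nat.bijective_iff_surjective_and_card Φ).mpr ⟨hsurj, by rw [hWcard, hcard]⟩
  exact ⟨(MulEquiv.ofBijective Φ hbijΦ).symm⟩
end
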